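/- arXiv:1711.10000 — 2 statements merged into one kernel-verified Lean document; each statement's English description precedes it below -/
import Mathlib

section
/- Let f(p) = sum over nonnegative integer tuples (eta_1,...,eta_{n+1}) with eta_1+...+eta_{n+1}=k of the product over i of C(p_i - eta_i, eta_i), where C denotes the generalized binomial coefficient (defined by the falling factorial formula for all integer arguments). Then f is invariant under replacing (p_1, p_2) by (p_1+1, p_2-1); consequently f(p) depends only on the sum p_1+...+p_{n+1}, the length n+1, and k. -/
open scoped BigOperators

/-- `l` is a partition: weakly decreasing list of positive integers. -/
def IsPartitionList (l : List ℕ) : Prop :=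
  l.Pairwise (· ≥ ·) ∧ ∀ x ∈ l, 0 < x

/-- `l` is a composition: list of positive integers. -/
def IsCompositionList (l : List ℕ) : Prop := ∀ x ∈ l, 0 < x

/-- cell `(i, j)` (row `i` from the top, column `j`, both 0-based) of the skew shape `lam/mu`. -/
def SkewCell (lam mu : List ℕ) (i j : ℕ) : Prop :=
  i < lam.length ∧ mu.getD i 0 ≤ j ∧ j < lam.getD i 0

/-- Semistandard filling of the skew shape `lam/mu` (rows weakly increase left to right,
columns strictly increase top to bottom), with junk value `0` off the shape. -/
def IsSkewSSYT (lam mu : List ℕ) (T : ℕ → ℕ → ℕ) : Prop :=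
  (∀ i j, ¬ SkewCell lam mu i j → T i j = 0) ∧
  (∀ i j, SkewCell lam mu i j → SkewCell lam mu i (j + 1) → T i j ≤ T i (j + 1)) ∧
  (∀ i j, SkewCell lam mu i j → SkewCell lam mu (i + 1) j → T i j < T (i + 1) j)

/-- number of cells of `lam/mu` that `T` fills with the value `v`. -/
def skewContent (lam mu : List ℕ) (T : ℕ → ℕ → ℕ) (v : ℕ) : ℕ :=
  ∑ i ∈ Finset.range lam.length,
    ((Finset.Ico (mu.getD i 0) (lam.getD i 0)).filter fun j => T i j = v).card

/-- The skew Schur function of `lam/mu` as a formal power series in variables `x_0, x_1, …`: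
the coefficient of a monomial `m` is the number of semistandard fillings of content `m`. -/
noncomputable def skewSchur (lam mu : List ℕ) : MvPowerSeries ℕ ℤ :=
  fun m => (Set.ncard {T : ℕ → ℕ → ℕ |
    IsSkewSSYT lam mu T ∧ ∀ v, skewContent lam mu T v = m v} : ℤ)

/-- The Schur function of a partition. -/
noncomputable def schurFn (lam : List ℕ) : MvPowerSeries ℕ ℤ := skewSchur lam []

/-- Outer shape of the ribbon whose row lengths read from top to bottom are `α`. -/
def ribbonOuter (α : List ℕ) : List ℕ :=
  List.ofFn fun i : Fin α.length => (α.drop (i : ℕ)).sum - (α.length - 1 - (i : ℕ))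

/-- Inner shape of the ribbon whose row lengths read from top to bottom are `α`. -/
def ribbonInner (α : List ℕ) : List ℕ :=
  List.ofFn fun i : Fin α.length =>
    (α.drop (i : ℕ)).sum - (α.length - 1 - (i : ℕ)) - α.getD (i : ℕ) 0

/-- The ribbon Schur function of the composition `α`. -/
noncomputable def ribbonSchur (α : List ℕ) : MvPowerSeries ℕ ℤ :=
  skewSchur (ribbonOuter α) (ribbonInner α)

/-- A symmetric function is Schur-positive if it is a finite nonnegative integer
combination of Schur functions of partitions. -/
def SchurPos (f : MvPowerSeries ℕ ℤ) : Prop :=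
  ∃ c : List ℕ →₀ ℕ, (∀ μ ∈ c.support, IsPartitionList μ) ∧
    f = c.sum fun μ n => (n : ℤ) • schurFn μ

/-- Strict Schur-positivity order: `f >_s g`. -/
def SchurGT (f g : MvPowerSeries ℕ ℤ) : Prop := SchurPos (f - g) ∧ f ≠ g

/-- near-concatenation of compositions. -/
def nearConcat (a b : List ℕ) : List ℕ :=
  a.dropLast ++ (a.getLastD 0 + b.headI) :: b.tail

/-- near-concatenation of `k` copies of `b`. -/
def odotPow (b : List ℕ) : ℕ → List ℕ
  | 0 => []
  | k + 1 => nearConcat (odotPow b k) b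

/-- composition of compositions `a ∘ b`. -/
def compComp (a b : List ℕ) : List ℕ := (a.map (odotPow b)).flatten

/-- `M_i` (with `i` 1-based): decrement the first part by one, increment the `i`-th part by one. -/
def Mi (α : List ℕ) (i : ℕ) : List ℕ :=
  (α.set (i - 1) (α.getD (i - 1) 0 + 1)).set 0 (α.headI - 1)

/-- the complete homogeneous symmetric function `h_N`: the sum of all monomials of degree `N`. -/
noncomputable def hN (N : ℕ) : MvPowerSeries ℕ ℤ :=
  fun m => if (∑ v ∈ m.support, m v) = N then 1 else 0

/-- `h_λ = h_{λ_1} ⋯ h_{λ_k}`. -/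
noncomputable def hProd (l : List ℕ) : MvPowerSeries ℕ ℤ := (l.map hN).prod

/-- lexicographic order on partitions (padding with zeros). -/
def LexLt (μ ν : List ℕ) : Prop :=
  ∃ k, (∀ i < k, μ.getD i 0 = ν.getD i 0) ∧ μ.getD k 0 < ν.getD k 0

/-- entrywise union (max) of two partitions. -/
def pUnion (a b : List ℕ) : List ℕ :=
  List.ofFn fun i : Fin (max a.length b.length) => max (a.getD (i : ℕ) 0) (b.getD (i : ℕ) 0)

/-- entrywise intersection (min) of two partitions. -/
def pInter (a b : List ℕ) : List ℕ :=
  List.ofFn fun i : Fin (min a.length b.length) => min (a.getD (i : ℕ) 0) (b.getD (i : ℕ) 0)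

/-- the number of end rows (first and last part) of `γ` equal to `a`. -/
def shortEnds (a : ℕ) (γ : List ℕ) : ℕ :=
  (if γ.headI = a then 1 else 0) + (if γ.getLastD 0 = a then 1 else 0)

/-- cells of the ribbon whose row lengths read from the bottom are `β`;
cells are pairs `(row, column)`, rows counted from the bottom starting at `0`. -/
def ribbonCells (β : List ℕ) : Finset (ℕ × ℕ) :=
  (Finset.range β.length).biUnion fun i =>
    (Finset.Ico ((β.take i).sum - i) ((β.take i).sum - i + β.getD i 0)).image fun j => (i, j)

/-- The box diagonal diagram `P_{R,S}`: cells `(x, y)` (column `x`, row `y` from the bottom,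
both 1-based, with the top-right corner of the cell at the point `(x, y)`) of the `R × S` grid
whose interior or top-left corner point is met by the line `y = (R/S) x`. -/
def boxDiagonal (R S : ℕ) : Finset (ℕ × ℕ) :=
  (Finset.Icc 1 S ×ˢ Finset.Icc 1 R).filter fun c =>
    (R : ℚ) * ((c.1 : ℚ) - 1) ≤ (S : ℚ) * (c.2 : ℚ) ∧
    (S : ℚ) * ((c.2 : ℚ) - 1) < (R : ℚ) * (c.1 : ℚ)

/-- length of row `y` (from the bottom, 1-based) of `P_{R,S}`. -/
def bdRowLen (R S y : ℕ) : ℕ := ((boxDiagonal R S).filter fun c => c.2 = y).card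

/-- length of column `x` (1-based) of `P_{R,S}`. -/
def bdColLen (R S x : ℕ) : ℕ := ((boxDiagonal R S).filter fun c => c.1 = x).card

/-- the set of columns occupied by row `y` of `P_{R,S}`. -/
def bdRowCols (R S y : ℕ) : Finset ℕ :=
  ((boxDiagonal R S).filter fun c => c.2 = y).image Prod.fst

/-- generalized binomial coefficient `C(z, k) = z(z-1)⋯(z-k+1)/k!` for arbitrary integer `z`. -/
def gbinom (z : ℤ) (k : ℕ) : ℚ :=
  (∏ i ∈ Finset.range k, ((z : ℚ) - (i : ℚ))) / (Nat.factorial k : ℚ)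

/-- `f(p) = ∑_{η_1+⋯+η_n = k} ∏_i C(p_i - η_i, η_i)`. -/
def jensenSum (n k : ℕ) (p : Fin n → ℤ) : ℚ :=
  ∑ η ∈ Finset.Nat.antidiagonalTuple n k, ∏ i, gbinom (p i - (η i : ℤ)) (η i)

/-! Write `G_z = ∑_j C(z - j, j) X^j ∈ ℚ⟦X⟧`, so that `f(p)` is the coefficient of `X^k` in
`∏ᵢ G_{p_i}`. Pascal's rule gives `G_{z+1} = G_z + X G_{z-1}`, hence the defect
`D(x, y) = G_{x+1} G_y - G_x G_{y+1}` satisfies `D(x, y) = X D(y - 1, x - 1)` and is divisible by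
every power of `X`, i.e. vanishes. Thus `G_x G_y = G_{x+y} G_0`, and
`∏ᵢ G_{p_i} = G_{∑ p_i} G_0^n` depends on `p` only through its sum. -/

theorem gbinom_eq_choose (z : ℤ) (k : ℕ) : gbinom z k = Ring.choose (z : ℚ) k := by
  rw [Ring.choose_eq_smul, smul_eq_mul, gbinom, div_eq_inv_mul, ← descPochhammer_eval_eq_prod_range,
    ← Polynomial.aeval_eq_smeval, ← Polynomial.eval_map_algebraMap, descPochhammer_map]

theorem gbinom_succ_succ (z : ℤ) (k : ℕ) :
    gbinom (z + 1) (k + 1) = gbinom z k + gbinom z (k + 1) := by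
  simp only [gbinom_eq_choose, Int.cast_add, Int.cast_one, Ring.choose_succ_succ]

namespace PowerSeries

theorem coeff_prod_fin_eq_sum_antidiagonalTuple {R : Type*} [CommSemiring R] (n k : ℕ)
    (f : Fin n → R⟦X⟧) :
    coeff k (∏ i, f i) = ∑ η ∈ Finset.Nat.antidiagonalTuple n k, ∏ i, coeff (η i) (f i) := by
  classical
  rw [coeff_prod, Finset.finsuppAntidiag, Finset.sum_map,
    ← Finset.piAntidiag_univ_fin_eq_antidiagonalTuple]
  exact Finset.sum_attach _ fun η : Fin n → ℕ => ∏ i, coeff (η i) (f i)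

theorem eq_zero_of_forall_eq_X_mul {R α : Type*} [Semiring R] {f : α → R⟦X⟧} (σ : α → α)
    (h : ∀ a, f a = X * f (σ a)) (a : α) : f a = 0 := by
  ext m
  induction m generalizing a with
  | zero => rw [h, coeff_zero_X_mul, map_zero]
  | succ m ih => rw [h, coeff_succ_X_mul, ih, map_zero, map_zero]

end PowerSeries

open PowerSeries

noncomputable def jensenSeries (z : ℤ) : ℚ⟦X⟧ :=
  PowerSeries.mk fun j => gbinom (z - j) j

theorem jensenSum_eq_coeff_prod (n k : ℕ) (p : Fin n → ℤ) :
    jensenSum n k p = coeff k (∏ i, jensenSeries (p i)) := by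
  simp only [coeff_prod_fin_eq_sum_antidiagonalTuple, jensenSeries, coeff_mk, jensenSum]

theorem jensenSeries_succ (z : ℤ) :
    jensenSeries (z + 1) = jensenSeries z + X * jensenSeries (z - 1) := by
  ext (_ | j)
  · simp [jensenSeries, gbinom]
  · simp only [jensenSeries, map_add, coeff_mk, coeff_succ_X_mul]
    push_cast
    rw [show z + 1 - ((j : ℤ) + 1) = z - (j + 1) + 1 by ring,
      show z - 1 - (j : ℤ) = z - (j + 1) by ring, gbinom_succ_succ, add_comm]

theorem jensenSeries_succ_mul (x y : ℤ) :
    jensenSeries (x + 1) * jensenSeries y = jensenSeries x * jensenSeries (y + 1) := by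
  refine sub_eq_zero.mp <| eq_zero_of_forall_eq_X_mul
    (f := fun a : ℤ × ℤ => jensenSeries (a.1 + 1) * jensenSeries a.2 -
      jensenSeries a.1 * jensenSeries (a.2 + 1)) (fun a => (a.2 - 1, a.1 - 1)) (fun a => ?_) (x, y)
  simp only [jensenSeries_succ, sub_add_cancel]
  ring

theorem jensenSeries_mul (x y : ℤ) :
    jensenSeries x * jensenSeries y = jensenSeries (x + y) * jensenSeries 0 := by
  induction x using Int.induction_on generalizing y with
  | zero => rw [zero_add, mul_comm]
  | succ x ih => rw [jensenSeries_succ_mul, ih, add_right_comm, add_assoc]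
  | pred x ih =>
    have h := jensenSeries_succ_mul (-x - 1) (y - 1)
    rw [sub_add_cancel, sub_add_cancel] at h
    rw [← h, ih, show -(x : ℤ) + (y - 1) = -x - 1 + y by ring]

theorem prod_jensenSeries (n : ℕ) (p : Fin (n + 1) → ℤ) :
    ∏ i, jensenSeries (p i) = jensenSeries (∑ i, p i) * jensenSeries 0 ^ n := by
  induction n with
  | zero => simp
  | succ n ih =>
    rw [Fin.prod_univ_succ, ih, ← mul_assoc, jensenSeries_mul, ← Fin.sum_univ_succ, mul_assoc,
      pow_succ']

theorem jensenSum_eq_coeff (n k : ℕ) (p : Fin (n + 1) → ℤ) :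
    jensenSum (n + 1) k p = coeff k (jensenSeries (∑ i, p i) * jensenSeries 0 ^ n) := by
  rw [jensenSum_eq_coeff_prod, prod_jensenSeries]

/-- the sum `f(p) = ∑_{η_1+⋯+η_{n+1}=k} ∏_i C(p_i-η_i, η_i)` is invariant under
replacing `(p_1, p_2)` by `(p_1+1, p_2-1)`; consequently it depends only on the sum of the
`p_i`, the length, and `k`. (Tuples of length `n+2 ≥ 2` so that two entries exist.) -/
theorem jensenSum_invariant (n k : ℕ) (p : Fin (n + 2) → ℤ) :
    jensenSum (n + 2) k p =
      jensenSum (n + 2) k (Function.update (Function.update p 0 (p 0 + 1)) 1 (p 1 - 1)) ∧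
    ∀ q : Fin (n + 2) → ℤ, (∑ i, p i) = (∑ i, q i) →
      jensenSum (n + 2) k p = jensenSum (n + 2) k q := by
  have depends_on_sum (q : Fin (n + 2) → ℤ) (hpq : ∑ i, p i = ∑ i, q i) :
      jensenSum (n + 2) k p = jensenSum (n + 2) k q := by
    rw [jensenSum_eq_coeff, jensenSum_eq_coeff, hpq]
  refine ⟨depends_on_sum _ ?_, depends_on_sum⟩
  have succ_succ_ne_one (i : Fin n) : i.succ.succ ≠ (1 : Fin (n + 2)) :=
    (Fin.succ_injective _).ne (Fin.succ_ne_zero i)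
  simp only [Fin.sum_univ_succ, Fin.succ_zero_eq_one, ne_eq, zero_ne_one, not_false_eq_true,
    Function.update_of_ne, Function.update_self, succ_succ_ne_one, Fin.succ_ne_zero]
  ring
end

section
/- For any positive integers R and S, the box diagonal diagram P_{R,S} is an equitable ribbon: all its row lengths lie in {a, a+1} for some a >= 1 and all its column lengths lie in {b, b+1} for some b >= 1. -/
open scoped BigOperators

/-!
Row `y + 1` of `P_{R,S}` is the interval of columns from `⌊S y / R⌋ + 1` to
`min (⌊S (y + 1) / R⌋ + 1) S`. Hence consecutive rows share exactly the column
`⌊S (y + 1) / R⌋ + 1`, every row below the top one has length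
`⌊S (y + 1) / R⌋ - ⌊S y / R⌋ + 1 ∈ {⌈S / R⌉, ⌈S / R⌉ + 1}`, and the top row has length
`S - ⌊S (R - 1) / R⌋ = ⌈S / R⌉`. The reflection `(x, y) ↦ (R + 1 - y, S + 1 - x)` in the
antidiagonal maps `P_{R,S}` into `P_{S,R}` and columns to rows, so the column lengths of `P_{R,S}`
are row lengths of `P_{S,R}`.
-/

open Finset

namespace Nat

variable {R : ℕ}

lemma ceilDiv_mul_lt_add (hR : 0 < R) (S : ℕ) : S ⌈/⌉ R * R < S + R := by
  rw [ceilDiv_eq_add_pred_div]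
  have := Nat.div_mul_le_self (S + R - 1) R
  omega

lemma le_ceilDiv_mul (hR : 0 < R) (S : ℕ) : S ≤ S ⌈/⌉ R * R := by
  rw [mul_comm]
  exact le_smul_ceilDiv hR

lemma one_le_ceilDiv (hR : 0 < R) {S : ℕ} (hS : 0 < S) : 1 ≤ S ⌈/⌉ R := by
  rw [ceilDiv_eq_add_pred_div]
  exact Nat.div_pos (by omega) hR

lemma sub_mul_sub_one_div (hR : 0 < R) (S : ℕ) : S - S * (R - 1) / R = S ⌈/⌉ R := by
  have hc₁ := le_ceilDiv_mul hR S
  have hc₂ := ceilDiv_mul_lt_add hR S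
  have hcS : S ⌈/⌉ R ≤ S := (ceilDiv_le_iff_le_mul hR).2 (Nat.le_mul_of_pos_left S hR)
  have hcRS : S ⌈/⌉ R * R ≤ S * R := Nat.mul_le_mul_right R hcS
  have hdiv : S * (R - 1) / R = S - S ⌈/⌉ R := by
    apply Nat.div_eq_of_lt_le
    · rw [Nat.sub_mul, Nat.mul_sub_one]
      omega
    · rw [Nat.add_mul, Nat.sub_mul, Nat.mul_sub_one]
      omega
  omega

lemma add_div_sub_div_mem_Icc_ceilDiv (hR : 0 < R) (t S : ℕ) :
    (t + S) / R - t / R ∈ Set.Icc (S ⌈/⌉ R - 1) (S ⌈/⌉ R) := by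
  have hc₁ := le_ceilDiv_mul hR S
  have hc₂ := ceilDiv_mul_lt_add hR S
  have hk₁ := Nat.div_mul_le_self t R
  have hk₂ := Nat.lt_mul_div_succ t hR
  have hm₁ := Nat.div_mul_le_self (t + S) R
  have hm₂ := Nat.lt_mul_div_succ (t + S) hR
  have hmono : t / R ≤ (t + S) / R := Nat.div_le_div_right (Nat.le_add_right t S)
  have hlower : S ⌈/⌉ R + t / R < (t + S) / R + 2 := by
    apply Nat.lt_of_mul_lt_mul_right (a := R)
    rw [Nat.add_mul, Nat.add_mul]
    rw [Nat.mul_add, Nat.mul_comm R] at hk₂ hm₂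
    omega
  have hupper : (t + S) / R < t / R + S ⌈/⌉ R + 1 := by
    apply Nat.lt_of_mul_lt_mul_right (a := R)
    rw [Nat.add_mul, Nat.add_mul]
    rw [Nat.mul_add, Nat.mul_comm R] at hk₂
    omega
  rw [Set.mem_Icc]
  omega

end Nat

section BoxDiagonal

variable {R S : ℕ}

lemma mem_boxDiagonal {x y : ℕ} :
    (x, y) ∈ boxDiagonal R S ↔
      (1 ≤ x ∧ x ≤ S) ∧ (1 ≤ y ∧ y ≤ R) ∧ R * x ≤ S * y + R ∧ S * y < R * x + S := by
  have key (a b c d : ℕ) : (a : ℚ) * ((b : ℚ) - 1) ≤ c * d ↔ a * b ≤ c * d + a := by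
    rw [mul_sub_one, sub_le_iff_le_add]
    norm_cast
  have key' (a b c d : ℕ) : (a : ℚ) * ((b : ℚ) - 1) < c * d ↔ a * b < c * d + a := by
    rw [mul_sub_one, sub_lt_iff_lt_add]
    norm_cast
  simp only [boxDiagonal, mem_filter, mem_product, mem_Icc, key, key']
  exact and_assoc

lemma mem_boxDiagonal_of_le_of_le {x x' x'' y : ℕ} (hx : (x, y) ∈ boxDiagonal R S)
    (hx'' : (x'', y) ∈ boxDiagonal R S) (h : x ≤ x') (h' : x' ≤ x'') :
    (x', y) ∈ boxDiagonal R S := by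
  rw [mem_boxDiagonal] at hx hx'' ⊢
  have := Nat.mul_le_mul_left R h
  have := Nat.mul_le_mul_left R h'
  omega

lemma mem_boxDiagonal_succ (hR : 0 < R) {x y : ℕ} :
    (x, y + 1) ∈ boxDiagonal R S ↔ x ∈ Icc (S * y / R + 1) (min (S * (y + 1) / R + 1) S) := by
  have hlow : S * y / R + 1 ≤ x ↔ S * y < R * x := by
    rw [Nat.succ_le_iff, Nat.div_lt_iff_lt_mul hR, mul_comm x]
  have hup : x ≤ S * (y + 1) / R + 1 ↔ R * x ≤ S * (y + 1) + R := by
    rw [← Nat.add_div_right _ hR, Nat.le_div_iff_mul_le hR, mul_comm x]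
  have hrow : S * y < R * x → x ≤ S → y < R := fun h hx =>
    Nat.lt_of_mul_lt_mul_left (a := S) (by nlinarith)
  rw [mem_boxDiagonal, mem_Icc, le_min_iff, hlow, hup, Nat.mul_succ]
  constructor
  · rintro ⟨⟨_, hxS⟩, _, h₁, h₂⟩
    omega
  · rintro ⟨h₂, h₁, hxS⟩
    have := hrow h₂ hxS
    have : 0 < x := Nat.pos_of_ne_zero fun hx => by simp [hx] at h₂
    omega

lemma bdRowCols_succ (hR : 0 < R) (y : ℕ) :
    bdRowCols R S (y + 1) = Icc (S * y / R + 1) (min (S * (y + 1) / R + 1) S) := by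
  ext x
  simp [bdRowCols, ← mem_boxDiagonal_succ hR]

lemma bdRowLen_eq_card_bdRowCols (y : ℕ) : bdRowLen R S y = (bdRowCols R S y).card := by
  refine (card_image_of_injOn ?_).symm
  rintro ⟨x, y₁⟩ h₁ ⟨x', y₂⟩ h₂ (rfl : x = x')
  simp only [mem_coe, mem_filter] at h₁ h₂
  rw [h₁.2, h₂.2]

lemma bdRowLen_succ (hR : 0 < R) (y : ℕ) :
    bdRowLen R S (y + 1) = min (S * (y + 1) / R + 1) S - S * y / R := by
  rw [bdRowLen_eq_card_bdRowCols, bdRowCols_succ hR, Nat.card_Icc]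
  omega

lemma bdRowLen_of_succ_lt (hR : 0 < R) (hS : 0 < S) {y : ℕ} (hy : y + 1 < R) :
    bdRowLen R S (y + 1) = S * (y + 1) / R - S * y / R + 1 := by
  have : S * (y + 1) / R < S := (Nat.div_lt_iff_lt_mul hR).2 (Nat.mul_lt_mul_of_pos_left hy hS)
  have : S * y / R ≤ S * (y + 1) / R := Nat.div_le_div_right (by gcongr; omega)
  rw [bdRowLen_succ hR]
  omega

lemma bdRowLen_self (hR : 0 < R) : bdRowLen R S R = S ⌈/⌉ R := by
  have h := bdRowLen_succ (S := S) hR (R - 1)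
  rw [Nat.sub_add_cancel hR] at h
  rw [h, Nat.mul_div_cancel _ hR, min_eq_right (Nat.le_succ S), Nat.sub_mul_sub_one_div hR]

lemma bdRowLen_eq_ceilDiv_or (hR : 0 < R) (hS : 0 < S) {y : ℕ} (hy₁ : 1 ≤ y) (hyR : y ≤ R) :
    bdRowLen R S y = S ⌈/⌉ R ∨ bdRowLen R S y = S ⌈/⌉ R + 1 := by
  rcases hyR.eq_or_lt with rfl | hyR
  · exact Or.inl (bdRowLen_self hR)
  obtain ⟨y, rfl⟩ := Nat.exists_eq_add_of_le' hy₁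
  have := Set.mem_Icc.1 (Nat.add_div_sub_div_mem_Icc_ceilDiv hR (S * y) S)
  rw [bdRowLen_of_succ_lt hR hS hyR, Nat.mul_succ]
  omega

lemma mem_boxDiagonal_flip {x y : ℕ} (h : (x, y) ∈ boxDiagonal R S) :
    (R + 1 - y, S + 1 - x) ∈ boxDiagonal S R := by
  rw [mem_boxDiagonal] at h ⊢
  obtain ⟨⟨hx₁, hxS⟩, ⟨hy₁, hyR⟩, h₁, h₂⟩ := h
  refine ⟨⟨by omega, by omega⟩, ⟨by omega, by omega⟩, ?_, ?_⟩ <;>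
  · zify [hxS.trans (Nat.le_succ S), hyR.trans (Nat.le_succ R)] at h₁ h₂ ⊢
    linarith

lemma bdColLen_eq_bdRowLen (x : ℕ) : bdColLen R S x = bdRowLen S R (S + 1 - x) := by
  refine card_nbij' (fun c => (R + 1 - c.2, S + 1 - c.1)) (fun c => (S + 1 - c.2, R + 1 - c.1))
    ?_ ?_ ?_ ?_
  all_goals
    rintro ⟨a, b⟩ h
    simp only [mem_coe, mem_filter] at h
    have hab := mem_boxDiagonal.1 h.1
  · exact mem_filter.2 ⟨mem_boxDiagonal_flip h.1, by dsimp only; omega⟩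
  · exact mem_filter.2 ⟨mem_boxDiagonal_flip h.1, by dsimp only; omega⟩
  · simp only [Prod.mk.injEq]
    omega
  · simp only [Prod.mk.injEq]
    omega

lemma bdRowCols_inter_succ (hR : 0 < R) (hS : 0 < S) {y : ℕ} (hy : y + 2 ≤ R) :
    bdRowCols R S (y + 1) ∩ bdRowCols R S (y + 2) = {S * (y + 1) / R + 1} := by
  have hcap : S * (y + 1) / R < S :=
    (Nat.div_lt_iff_lt_mul hR).2 (Nat.mul_lt_mul_of_pos_left (by omega) hS)
  have hmono₁ : S * y / R ≤ S * (y + 1) / R := Nat.div_le_div_right (by gcongr; omega)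
  have hmono₂ : S * (y + 1) / R ≤ S * (y + 1 + 1) / R := Nat.div_le_div_right (by gcongr; omega)
  rw [bdRowCols_succ hR, bdRowCols_succ hR]
  ext z
  simp only [mem_inter, mem_Icc, mem_singleton, le_min_iff]
  omega

end BoxDiagonal

/-- for any `R, S ≥ 1` the box diagonal diagram `P_{R,S}` is an equitable ribbon:
all row lengths lie in `{a, a+1}` for some `a ≥ 1`, all column lengths lie in `{b, b+1}` for
some `b ≥ 1`, and it is a ribbon (each row contiguous, consecutive rows overlapping in
exactly one column). -/
theorem boxDiagonal_equitable (R S : ℕ) (hR : 1 ≤ R) (hS : 1 ≤ S) :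
    (∃ a : ℕ, 1 ≤ a ∧ ∀ i, 1 ≤ i → i ≤ R →
      bdRowLen R S i = a ∨ bdRowLen R S i = a + 1) ∧
    (∃ b : ℕ, 1 ≤ b ∧ ∀ j, 1 ≤ j → j ≤ S →
      bdColLen R S j = b ∨ bdColLen R S j = b + 1) ∧
    (∀ i x x' x'', 1 ≤ i → i ≤ R → (x, i) ∈ boxDiagonal R S → (x'', i) ∈ boxDiagonal R S →
      x ≤ x' → x' ≤ x'' → (x', i) ∈ boxDiagonal R S) ∧
    (∀ i, 1 ≤ i → i < R → (bdRowCols R S i ∩ bdRowCols R S (i + 1)).card = 1) := by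
  refine ⟨⟨S ⌈/⌉ R, Nat.one_le_ceilDiv hR hS, fun i => bdRowLen_eq_ceilDiv_or hR hS⟩,
    ⟨R ⌈/⌉ S, Nat.one_le_ceilDiv hS hR, fun j hj₁ hjS => ?_⟩,
    fun i x x' x'' _ _ => mem_boxDiagonal_of_le_of_le, fun i hi₁ hiR => ?_⟩
  · rw [bdColLen_eq_bdRowLen]
    exact bdRowLen_eq_ceilDiv_or hS hR (by omega) (by omega)
  · obtain ⟨y, rfl⟩ := Nat.exists_eq_add_of_le' hi₁
    rw [bdRowCols_inter_succ hR hS hiR, card_singleton]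
end
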